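/- For every k ≥ 3, the Narayana polynomial M_k(t) = ∑_i (1/(k-2))·C(k-2,i)·C(k-2,i+1)·t^{2i} has integer coefficients, is palindromic of degree 2k-6 (i.e. t^{2k-6} M_k(1/t) = M_k(t)), and if k is even then (1+t^2) divides M_k(t). -/

import Mathlib

/-- Binomial coefficient with integer arguments, with the convention that
`binom n m = 0` when `m < 0` or `m > n`. -/
def binom (n m : ℤ) : ℤ := if 0 ≤ m ∧ m ≤ n then n.toNat.choose m.toNat else 0

open Polynomial

/-- The Narayana polynomial `M_k(t) = ∑_i (1/(k-2)) C(k-2,i) C(k-2,i+1) t^{2i}` over ℚ. -/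
noncomputable def Mk (k : ℕ) : Polynomial ℚ :=
  ∑ i ∈ Finset.range (k - 2),
    Polynomial.C ((1 / ((k : ℚ) - 2)) * (binom ((k : ℤ) - 2) (i : ℤ) : ℚ) *
        (binom ((k : ℤ) - 2) ((i : ℤ) + 1) : ℚ)) *
      X ^ (2 * i)

/-!
Write `n = k - 2` and `M_k(t) = P(t^2)`. From `n C(n-1,i) = (n-i) C(n,i)` one gets
`C(n,i) C(n,i+1) / n = C(n-1,i) C(n,i+1) - C(n,i) C(n-1,i+1)`, an integer. The symmetry
`C(n,j) = C(n,n-j)` makes the coefficients of `P` palindromic, hence so are those of `M_k`. When `n`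
is even, `P` is palindromic of odd degree `n - 1`, so its terms cancel in pairs at `u = -1`; thus
`u + 1` divides `P(u)` and `1 + t^2` divides `M_k(t)`.
-/

open Finset

namespace Polynomial

variable {R : Type*}

theorem reflect_sum [Semiring R] {ι : Type*} (N : ℕ) (s : Finset ι) (f : ι → R[X]) :
    reflect N (∑ i ∈ s, f i) = ∑ i ∈ s, reflect N (f i) :=
  map_sum (⟨⟨reflect N, reflect_zero⟩, fun f g => reflect_add f g N⟩ : R[X] →+ R[X]) f s

theorem reflect_sum_C_mul_X_pow_mul [Semiring R] (m n : ℕ) (a : ℕ → R) :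
    reflect (m * (n - 1)) (∑ i ∈ range n, C (a i) * X ^ (m * i)) =
      ∑ i ∈ range n, C (a (n - 1 - i)) * X ^ (m * i) := by
  rw [reflect_sum, ← sum_range_reflect]
  refine sum_congr rfl fun i hi => ?_
  have hi : i < n := mem_range.1 hi
  rw [reflect_C_mul_X_pow, revAt_le (Nat.mul_le_mul_left m (by omega)), ← Nat.mul_sub,
    show n - 1 - (n - 1 - i) = i by omega]

theorem neg_one_pow_pred_sub [CommRing R] {n i : ℕ} (hn : Even n) (hi : i < n) :
    (-1 : R) ^ (n - 1 - i) = -(-1) ^ i := by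
  have hsq : (-1 : R) ^ i * (-1) ^ i = 1 := by rw [← pow_add]; exact (Even.add_self i).neg_one_pow
  have hprod : (-1 : R) ^ (n - 1 - i) * (-1) ^ i = -1 := by
    rw [← pow_add, Nat.sub_add_cancel (by omega),
      (Nat.Even.sub_odd (by omega) hn odd_one).neg_one_pow]
  linear_combination (-1 : R) ^ i * hprod - (-1 : R) ^ (n - 1 - i) * hsq

theorem eval_neg_one_sum_eq_zero_of_palindromic [CommRing R] {n : ℕ} (hn : Even n) {a : ℕ → R}
    (ha : ∀ i < n, a (n - 1 - i) = a i) : (∑ i ∈ range n, C (a i) * X ^ i).eval (-1) = 0 := by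
  simp only [eval_finsetSum, eval_mul, eval_C, eval_pow, eval_X]
  refine sum_involution (fun i _ => n - 1 - i) (fun i hi => ?_) (fun i hi _ => ?_)
    (fun i hi => ?_) (fun i hi => ?_)
  all_goals have hi : i < n := mem_range.1 hi
  · rw [ha i hi, neg_one_pow_pred_sub hn hi]
    ring
  · obtain ⟨t, rfl⟩ := hn
    omega
  · simp only [mem_range]; omega
  · omega

theorem one_add_X_sq_dvd_sum_of_palindromic [CommRing R] {n : ℕ} (hn : Even n) {a : ℕ → R}
    (ha : ∀ i < n, a (n - 1 - i) = a i) :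
    (1 + X ^ 2 : R[X]) ∣ ∑ i ∈ range n, C (a i) * X ^ (2 * i) := by
  have hroot := dvd_iff_isRoot.2 (eval_neg_one_sum_eq_zero_of_palindromic hn ha)
  convert _root_.map_dvd (expand R 2) hroot using 1
  · simp only [map_sub, expand_X, map_neg, map_one]; ring
  · simp only [map_sum, map_mul, map_pow, expand_X, expand_C, pow_mul]

end Polynomial

theorem binom_natCast (n m : ℕ) : binom n m = n.choose m := by
  unfold binom
  split_ifs with h
  · simp
  · rw [Nat.choose_eq_zero_of_lt (by omega), Nat.cast_zero]

theorem Nat.cast_add_one_mul_choose (m i : ℕ) :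
    ((m : ℤ) + 1) * m.choose i = ((m : ℤ) + 1 - i) * (m + 1).choose i := by
  rcases le_or_gt i (m + 1) with h | h
  · have := congrArg (Nat.cast : ℕ → ℤ) (Nat.choose_mul_succ_eq m i)
    push_cast [Nat.cast_sub h] at this
    linear_combination this
  · rw [Nat.choose_eq_zero_of_lt (by omega), Nat.choose_eq_zero_of_lt h]
    simp

/-- The Narayana number `N(n, i + 1) = C(n, i) C(n, i + 1) / n`, see `natCast_mul_narayana`. -/
def narayana (n i : ℕ) : ℤ :=
  (n - 1).choose i * n.choose (i + 1) - n.choose i * (n - 1).choose (i + 1)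

theorem natCast_mul_narayana (n i : ℕ) : n * narayana n i = n.choose i * n.choose (i + 1) := by
  rcases n with _ | m
  · simp [narayana]
  · have h₁ := Nat.cast_add_one_mul_choose m i
    have h₂ := Nat.cast_add_one_mul_choose m (i + 1)
    simp only [narayana, Nat.add_sub_cancel]
    push_cast at h₁ h₂ ⊢
    linear_combination
      (((m + 1).choose (i + 1) : ℕ) : ℤ) * h₁ - (((m + 1).choose i : ℕ) : ℤ) * h₂

theorem narayana_symm {n i : ℕ} (hi : i < n) : narayana n (n - 1 - i) = narayana n i := by
  have hn : (n : ℤ) ≠ 0 := by exact_mod_cast (show n ≠ 0 by omega)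
  refine mul_left_cancel₀ hn ?_
  rw [natCast_mul_narayana, natCast_mul_narayana, show n - 1 - i + 1 = n - i by omega,
    show n - 1 - i = n - (i + 1) by omega, Nat.choose_symm (by omega), Nat.choose_symm hi.le,
    mul_comm]

open Polynomial

noncomputable def narayanaPoly (n : ℕ) : ℤ[X] :=
  ∑ i ∈ range n, C (narayana n i) * X ^ (2 * i)

theorem reflect_narayanaPoly (n : ℕ) :
    reflect (2 * (n - 1)) (narayanaPoly n) = narayanaPoly n := by
  rw [narayanaPoly, reflect_sum_C_mul_X_pow_mul]
  exact sum_congr rfl fun i hi => by rw [narayana_symm (mem_range.1 hi)]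

theorem one_add_X_sq_dvd_narayanaPoly {n : ℕ} (hn : Even n) :
    (1 + X ^ 2 : ℤ[X]) ∣ narayanaPoly n :=
  one_add_X_sq_dvd_sum_of_palindromic hn fun _ hi => narayana_symm hi

theorem Mk_eq_map_narayanaPoly (k : ℕ) :
    Mk k = (narayanaPoly (k - 2)).map (Int.castRingHom ℚ) := by
  simp only [Mk, narayanaPoly, Polynomial.map_sum, Polynomial.map_mul, Polynomial.map_pow, map_C,
    map_X]
  refine sum_congr rfl fun i hi => ?_
  obtain ⟨n, rfl⟩ : ∃ n, k = n + 2 := ⟨k - 2, by have := mem_range.1 hi; omega⟩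
  have hn : (n : ℚ) ≠ 0 := by have := mem_range.1 hi; exact_mod_cast (show n ≠ 0 by omega)
  congr 2
  have h := congrArg (Int.cast : ℤ → ℚ) (natCast_mul_narayana n i)
  simp only [Nat.add_sub_cancel, Nat.cast_add, Nat.cast_ofNat, add_sub_cancel_right]
  rw [show (i : ℤ) + 1 = (i + 1 : ℕ) by push_cast; ring, binom_natCast, binom_natCast,
    eq_intCast]
  push_cast at h ⊢
  rw [mul_assoc, ← h]
  field_simp

theorem stmt_18_general (k : ℕ) :
    (∀ n : ℕ, ∃ z : ℤ, (Mk k).coeff n = (z : ℚ)) ∧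
    Polynomial.reflect (2 * k - 6) (Mk k) = Mk k ∧
    (Even k → (1 + X ^ 2 : Polynomial ℚ) ∣ Mk k) := by
  rw [Mk_eq_map_narayanaPoly]
  refine ⟨fun n => ⟨_, coeff_map _ n⟩, ?_, fun hk => ?_⟩
  · rw [reflect_map, show 2 * k - 6 = 2 * (k - 2 - 1) by omega, reflect_narayanaPoly]
  · simpa using Polynomial.map_dvd (Int.castRingHom ℚ)
      (one_add_X_sq_dvd_narayanaPoly (hk.tsub even_two))

/-- For `k ≥ 3`, `M_k` has integer coefficients, is palindromic of degree `2k-6`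
(i.e. `t^{2k-6} M_k(1/t) = M_k(t)`), and `(1+t^2) ∣ M_k` when `k` is even. -/
theorem stmt_18 (k : ℕ) (hk : 3 ≤ k) :
    (∀ n : ℕ, ∃ z : ℤ, (Mk k).coeff n = (z : ℚ)) ∧
    Polynomial.reflect (2 * k - 6) (Mk k) = Mk k ∧
    (Even k → (1 + X ^ 2 : Polynomial ℚ) ∣ Mk k) :=
  stmt_18_general k
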